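/- Define r(t) = r₀·exp(-(erf⁻¹(t·√(4/(r₀²π))))²) for t ∈ [0, r₀√π/2), where r₀ > 0. Then r satisfies r''(t) = -2/r(t) on this interval, with r(0) = r₀ and r'(0) = 0. -/

import Mathlib

/-- The error function erf(x) = (2/√π) ∫₀ˣ e^{-s²} ds. -/
noncomputable def errorFun (x : ℝ) : ℝ :=
  (2 / Real.sqrt Real.pi) * ∫ s in (0:ℝ)..x, Real.exp (-s ^ 2)

/-- The inverse error function on (-1,1). -/
noncomputable def errorFunInv : ℝ → ℝ := Function.invFun errorFun

open Real MeasureTheory Set Filter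

lemma errorFun_hasDerivAt (x : ℝ) :
    HasDerivAt errorFun (2 / Real.sqrt Real.pi * Real.exp (-x ^ 2)) x := by
  have hc : Continuous fun s : ℝ => Real.exp (-s ^ 2) := by continuity
  exact (intervalIntegral.integral_hasDerivAt_right (hc.intervalIntegrable 0 x)
    hc.aestronglyMeasurable.stronglyMeasurableAtFilter hc.continuousAt).const_mul _

lemma errorFun_deriv_pos (x : ℝ) : 0 < 2 / Real.sqrt Real.pi * Real.exp (-x ^ 2) := by
  positivity

lemma errorFun_strictMono : StrictMono errorFun :=
  strictMono_of_deriv_pos fun x => by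
    rw [(errorFun_hasDerivAt x).deriv]; exact errorFun_deriv_pos x

lemma errorFun_continuous : Continuous errorFun :=
  continuous_iff_continuousAt.2 fun x => (errorFun_hasDerivAt x).continuousAt

lemma errorFunInv_errorFun (x : ℝ) : errorFunInv (errorFun x) = x :=
  Function.leftInverse_invFun errorFun_strictMono.injective x

lemma errorFun_zero : errorFun 0 = 0 := by simp [errorFun]

lemma errorFunInv_zero : errorFunInv 0 = 0 := by
  have := errorFunInv_errorFun 0
  rwa [errorFun_zero] at this

lemma gauss_integrableOn_Ioi : IntegrableOn (fun s : ℝ => Real.exp (-s ^ 2)) (Ioi 0) := by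
  have := (integrable_exp_neg_mul_sq (one_pos)).integrableOn (s := Ioi (0:ℝ))
  simpa using this

lemma gauss_integral_Ioi : ∫ s in Ioi (0:ℝ), Real.exp (-s ^ 2) = Real.sqrt Real.pi / 2 := by
  have := integral_gaussian_Ioi 1
  simpa using this

lemma errorFun_tendsto_atTop : Tendsto errorFun atTop (nhds 1) := by
  have h := intervalIntegral_tendsto_integral_Ioi 0 gauss_integrableOn_Ioi tendsto_id
  rw [gauss_integral_Ioi] at h
  have h2 := h.const_mul (2 / Real.sqrt Real.pi)
  have hπ : Real.sqrt Real.pi ≠ 0 := ne_of_gt (Real.sqrt_pos.2 Real.pi_pos)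
  have : 2 / Real.sqrt Real.pi * (Real.sqrt Real.pi / 2) = 1 := by field_simp
  rw [this] at h2
  exact h2

lemma gauss_integral_Iic : ∫ s in Iic (0:ℝ), Real.exp (-s ^ 2) = Real.sqrt Real.pi / 2 := by
  have h := integral_comp_neg_Ioi (0:ℝ) (fun s => Real.exp (-s ^ 2))
  simp only [neg_sq, neg_zero] at h
  rw [← h]
  exact gauss_integral_Ioi

lemma gauss_integrableOn_Iic : IntegrableOn (fun s : ℝ => Real.exp (-s ^ 2)) (Iic 0) := by
  have := (integrable_exp_neg_mul_sq (one_pos)).integrableOn (s := Iic (0:ℝ))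
  simpa using this

lemma errorFun_tendsto_atBot : Tendsto errorFun atBot (nhds (-1)) := by
  have h := intervalIntegral_tendsto_integral_Iic 0 gauss_integrableOn_Iic tendsto_id
  rw [gauss_integral_Iic] at h
  have h2 : Tendsto (fun x : ℝ => (2 / Real.sqrt Real.pi) * -∫ s in x..0, Real.exp (-s ^ 2))
      atBot (nhds ((2 / Real.sqrt Real.pi) * -(Real.sqrt Real.pi / 2))) :=
    (h.neg).const_mul _
  have hπ : Real.sqrt Real.pi ≠ 0 := ne_of_gt (Real.sqrt_pos.2 Real.pi_pos)
  have he : 2 / Real.sqrt Real.pi * -(Real.sqrt Real.pi / 2) = -1 := by field_simp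
  rw [he] at h2
  refine h2.congr fun x => ?_
  simp [errorFun, intervalIntegral.integral_symm 0 x]

lemma errorFun_Ioo_subset_range : Ioo (-1 : ℝ) 1 ⊆ Set.range errorFun := by
  intro y hy
  obtain ⟨a, ha⟩ := (errorFun_tendsto_atBot.eventually (eventually_lt_nhds hy.1)).exists
  obtain ⟨b, hb⟩ := (errorFun_tendsto_atTop.eventually (eventually_gt_nhds hy.2)).exists
  exact intermediate_value_univ a b errorFun_continuous ⟨ha.le, hb.le⟩

lemma errorFun_invFun_eq {y : ℝ} (hy : y ∈ Ioo (-1:ℝ) 1) : errorFun (errorFunInv y) = y :=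
  Function.invFun_eq (errorFun_Ioo_subset_range hy)

lemma errorFun_mem_Ioo (x : ℝ) : errorFun x ∈ Ioo (-1:ℝ) 1 := by
  constructor
  · have h1 : errorFun (x - 1) < errorFun x := errorFun_strictMono (by linarith)
    have h2 : -1 ≤ errorFun (x - 1) := by
      refine le_of_tendsto errorFun_tendsto_atBot ?_
      filter_upwards [eventually_le_atBot (x - 1)] with z hz
      exact (errorFun_strictMono.monotone hz)
    linarith
  · have h1 : errorFun x < errorFun (x + 1) := errorFun_strictMono (by linarith)
    have h2 : errorFun (x + 1) ≤ 1 := by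
      refine ge_of_tendsto errorFun_tendsto_atTop ?_
      filter_upwards [eventually_ge_atTop (x + 1)] with z hz
      exact (errorFun_strictMono.monotone hz)
    linarith

lemma errorFunInv_image : errorFunInv '' (Ioo (-1:ℝ) 1) = Set.univ := by
  apply Set.eq_univ_of_forall
  intro x
  exact ⟨errorFun x, errorFun_mem_Ioo x, errorFunInv_errorFun x⟩

lemma errorFunInv_strictMonoOn : StrictMonoOn errorFunInv (Ioo (-1:ℝ) 1) := by
  intro x hx y hy hxy
  by_contra h
  push_neg at h
  have := errorFun_strictMono.monotone h
  rw [errorFun_invFun_eq hy, errorFun_invFun_eq hx] at this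
  exact absurd this (not_le.2 hxy)

lemma errorFunInv_continuousAt {a : ℝ} (ha : a ∈ Ioo (-1:ℝ) 1) :
    ContinuousAt errorFunInv a := by
  refine errorFunInv_strictMonoOn.continuousAt_of_image_mem_nhds
    (isOpen_Ioo.mem_nhds ha) ?_
  rw [errorFunInv_image]
  exact Filter.univ_mem

lemma errorFunInv_hasDerivAt {a : ℝ} (ha : a ∈ Ioo (-1:ℝ) 1) :
    HasDerivAt errorFunInv (2 / Real.sqrt Real.pi * Real.exp (-(errorFunInv a) ^ 2))⁻¹ a := by
  refine HasDerivAt.of_local_left_inverse (errorFunInv_continuousAt ha)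
    (errorFun_hasDerivAt _) (ne_of_gt (errorFun_deriv_pos _)) ?_
  filter_upwards [isOpen_Ioo.mem_nhds ha] with y hy
  exact errorFun_invFun_eq hy


/-- r(t) = r₀·exp(-(erf⁻¹(t·√(4/(r₀²π))))²) solves r'' = -2/r on
[0, r₀√π/2) with r(0) = r₀ and r'(0) = 0. -/
theorem hmcf_sphere_analytic_solution_zero_velocity
    (r₀ : ℝ) (hr₀ : 0 < r₀)
    (r : ℝ → ℝ)
    (hr : r = fun t =>
      r₀ * Real.exp (-(errorFunInv (t * Real.sqrt (4 / (r₀ ^ 2 * Real.pi)))) ^ 2)) :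
    (∀ t ∈ Set.Ico 0 (r₀ * Real.sqrt Real.pi / 2),
        deriv (deriv r) t = -2 / r t) ∧
    r 0 = r₀ ∧ deriv r 0 = 0 := by
  subst hr
  have hπ : (0:ℝ) < Real.sqrt Real.pi := Real.sqrt_pos.2 Real.pi_pos
  set c : ℝ := Real.sqrt (4 / (r₀ ^ 2 * Real.pi)) with hcdef
  have hc : c = 2 / (r₀ * Real.sqrt Real.pi) := by
    rw [hcdef, show 4 / (r₀ ^ 2 * Real.pi) = (2 / (r₀ * Real.sqrt Real.pi)) ^ 2 by
      rw [div_pow, mul_pow, Real.sq_sqrt Real.pi_pos.le]; norm_num]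
    exact Real.sqrt_sq (by positivity)
  have hcpos : 0 < c := by rw [hc]; positivity
  -- the inner function and its derivative
  have hinner : ∀ t : ℝ, t * c ∈ Ioo (-1:ℝ) 1 →
      HasDerivAt (fun s => errorFunInv (s * c))
        ((2 / Real.sqrt Real.pi * Real.exp (-(errorFunInv (t * c)) ^ 2))⁻¹ * c) t := by
    intro t ht
    exact (errorFunInv_hasDerivAt ht).comp t (hasDerivAt_mul_const c)
  have key : ∀ t : ℝ, t * c ∈ Ioo (-1:ℝ) 1 →
      HasDerivAt (fun s => r₀ * Real.exp (-(errorFunInv (s * c)) ^ 2))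
        (-2 * errorFunInv (t * c)) t := by
    intro t ht
    have h1 := hinner t ht
    have h2 := ((h1.pow 2).neg).exp.const_mul r₀
    have he : Real.exp (-(errorFunInv (t * c)) ^ 2) ≠ 0 := Real.exp_ne_zero _
    refine HasDerivAt.congr_deriv (f := fun s => r₀ * Real.exp (-(errorFunInv (s * c)) ^ 2)) h2 ?_
    simp only [Pi.neg_apply, Pi.pow_apply]
    rw [hc]
    field_simp
    ring
  have hopen : IsOpen {s : ℝ | s * c ∈ Ioo (-1:ℝ) 1} :=
    isOpen_Ioo.preimage (continuous_id.mul continuous_const)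
  have hmem : ∀ t ∈ Set.Ico 0 (r₀ * Real.sqrt Real.pi / 2), t * c ∈ Ioo (-1:ℝ) 1 := by
    intro t ht
    constructor
    · nlinarith [ht.1, hcpos]
    · have h1 : t * c < (r₀ * Real.sqrt Real.pi / 2) * c := by
        exact mul_lt_mul_of_pos_right ht.2 hcpos
      have h2 : (r₀ * Real.sqrt Real.pi / 2) * c = 1 := by
        rw [hc]; field_simp
      linarith
  refine ⟨?_, ?_, ?_⟩
  · intro t ht
    have htc := hmem t ht
    have hev : deriv (fun s => r₀ * Real.exp (-(errorFunInv (s * c)) ^ 2))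
        =ᶠ[nhds t] fun s => -2 * errorFunInv (s * c) := by
      filter_upwards [hopen.mem_nhds htc] with s hs
      exact (key s hs).deriv
    rw [hev.deriv_eq]
    have h3 := (hinner t htc).const_mul (-2)
    rw [h3.deriv]
    have he : Real.exp (-(errorFunInv (t * c)) ^ 2) ≠ 0 := Real.exp_ne_zero _
    rw [hc]
    field_simp
  · simp [errorFunInv_zero]
  · have h0 : (0:ℝ) * c ∈ Ioo (-1:ℝ) 1 := by norm_num
    rw [(key 0 h0).deriv]
    simp [errorFunInv_zero]
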